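/- Let φ be an analytic selfmap of the unit disc D. Every Bloch function u induces a bounded weighted composition operator uC_φ : B → B (i.e. M(B,φ) = B) if and only if (1) sup_{z∈D}|φ(z)| < 1 and (2) φ is a multiplier of the Bloch space. -/

import Mathlib

/-!
Both directions rest on the growth estimate `|f z| ≤ ‖f‖_B · log (e / (1 - |z|²))` and on
`(u C_φ f)' = u' · f ∘ φ + u φ' · f' ∘ φ`.

If `|φ| ≤ r < 1`, then `f ∘ φ` and `f' ∘ φ` are bounded by multiples of `‖f‖_B`, and
`(1 - |z|²) |u φ'|` is bounded because `φ u` and `u` are Bloch functions; so `u C_φ` is bounded.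

Conversely, testing `u C_φ` on `f = z` bounds `(1 - |z|²) |φ'(z)| |u(z)|`, and testing it on
combinations of the kernels `f_a = log (e / (1 - ā z))` with `a = φ z` bounds
`(1 - |z|²) |u'(z)| log (e / (1 - |φ z|²))`, for every Bloch function `u`. Gliding-hump series
`u = ∑ cₖ f_{bₖ}`, whose terms all have nonnegative real part at the points `bⱼ`, turn these
bounds for all `u` into the logarithmic multiplier condition on `φ` (hence `M_φ` is bounded, by
the growth estimate) and into boundedness of `log (e / (1 - |φ|²))`, i.e. `sup |φ| < 1`.
-/

open Complex Metric Set Filter MeasureTheory Finset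

noncomputable section

/-- The open unit disc in ℂ. -/
def D1 : Set ℂ := Metric.ball 0 1

/-- Analytic (holomorphic) on the open unit disc. -/
def AnalyticOnD (f : ℂ → ℂ) : Prop := DifferentiableOn ℂ f D1

/-- Bloch seminorm. -/
def blochSemi (f : ℂ → ℂ) : ℝ := ⨆ z : D1, (1 - ‖(z : ℂ)‖ ^ 2) * ‖deriv f (z : ℂ)‖

/-- Bloch norm. -/
def blochNorm (f : ℂ → ℂ) : ℝ := ‖f 0‖ + blochSemi f

/-- Membership in the Bloch space. -/
def InBloch (f : ℂ → ℂ) : Prop :=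
  AnalyticOnD f ∧ ∃ C, ∀ z ∈ D1, (1 - ‖z‖ ^ 2) * ‖deriv f z‖ ≤ C

/-- Sup norm over the unit disc. -/
def supNormD (f : ℂ → ℂ) : ℝ := ⨆ z : D1, ‖f (z : ℂ)‖

/-- Weighted composition operator uC_φ. -/
def wco (u φ : ℂ → ℂ) (f : ℂ → ℂ) : ℂ → ℂ := fun z => u z * f (φ z)

/-- Multiplication operator M_u. -/
def mult (u : ℂ → ℂ) (f : ℂ → ℂ) : ℂ → ℂ := fun z => u z * f z

/-- The weight u_{(n)} = ∏_{j=0}^{n-1} u ∘ φ_j. -/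
def wprod (u φ : ℂ → ℂ) (n : ℕ) : ℂ → ℂ := fun z => ∏ j ∈ Finset.range n, u (φ^[j] z)

/-- Boundedness of an operator on the Bloch space. -/
def BddOnBloch (T : (ℂ → ℂ) → (ℂ → ℂ)) : Prop :=
  ∃ C, ∀ f, InBloch f → InBloch (T f) ∧ blochNorm (T f) ≤ C * blochNorm f

/-- Operator norm on the Bloch space. -/
def opNormB (T : (ℂ → ℂ) → (ℂ → ℂ)) : ℝ :=
  sInf {C : ℝ | 0 ≤ C ∧ ∀ f, InBloch f → blochNorm (T f) ≤ C * blochNorm f}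

/-- Invertibility of an operator on the Bloch space (bounded two-sided inverse). -/
def InvertibleOnBloch (T : (ℂ → ℂ) → (ℂ → ℂ)) : Prop :=
  BddOnBloch T ∧ ∃ S, BddOnBloch S ∧
    ∀ f, InBloch f → Set.EqOn (S (T f)) f D1 ∧ Set.EqOn (T (S f)) f D1

/-- Spectrum of an operator acting on the Bloch space. -/
def blochSpectrum (T : (ℂ → ℂ) → (ℂ → ℂ)) : Set ℂ :=
  {lam | ¬ InvertibleOnBloch (fun f z => lam * f z - T f z)}

/-- Automorphism of the unit disc (Möbius form). -/
def IsDiscAuto (φ : ℂ → ℂ) : Prop :=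
  ∃ lam a : ℂ, ‖lam‖ = 1 ∧ a ∈ D1 ∧ ∀ z, φ z = lam * (a - z) / (1 - (starRingEnd ℂ) a * z)

/-- Hyperbolic distance on the unit disc. -/
def hypDist (z w : ℂ) : ℝ :=
  (1 / 2) * Real.log ((1 + ‖(z - w) / (1 - (starRingEnd ℂ) z * w)‖) /
    (1 - ‖(z - w) / (1 - (starRingEnd ℂ) z * w)‖))

/-- The disc algebra A(𝔻). -/
def InDiscAlgebra (u : ℂ → ℂ) : Prop :=
  ContinuousOn u (Metric.closedBall 0 1) ∧ AnalyticOnD u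

/-- u is bounded away from zero on the unit disc. -/
def BoundedAwayFromZero (u : ℂ → ℂ) : Prop := ∃ δ > 0, ∀ z ∈ D1, δ ≤ ‖u z‖

/-- Parabolic automorphism with unique fixed point a on the unit circle (φ'(a)=1). -/
def IsParabolicAuto (φ : ℂ → ℂ) (a : ℂ) : Prop :=
  IsDiscAuto φ ∧ ‖a‖ = 1 ∧ φ a = a ∧ deriv φ a = 1 ∧
    ∀ w, ‖w‖ ≤ 1 → φ w = w → w = a

/-- Hyperbolic automorphism with attractive fixed point a and repulsive fixed point b. -/
def IsHyperbolicAuto (φ : ℂ → ℂ) (a b : ℂ) : Prop :=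
  IsDiscAuto φ ∧ ‖a‖ = 1 ∧ ‖b‖ = 1 ∧ a ≠ b ∧ φ a = a ∧ φ b = b ∧
    ∃ μ : ℝ, 0 < μ ∧ μ < 1 ∧ deriv φ a = (μ : ℂ)

/-- Square of the Dirichlet norm (normalized area measure on 𝔻). -/
def dirichletNormSq (f : ℂ → ℂ) : ℝ :=
  ‖f 0‖ ^ 2 + (1 / Real.pi) * ∫ z in D1, ‖deriv f z‖ ^ 2

/-- Dirichlet norm. -/
def dirichletNorm (f : ℂ → ℂ) : ℝ := Real.sqrt (dirichletNormSq f)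

/-- Membership in the Dirichlet space. -/
def InDirichlet (f : ℂ → ℂ) : Prop :=
  AnalyticOnD f ∧ MeasureTheory.IntegrableOn (fun z => ‖deriv f z‖ ^ 2) D1

/-- Boundedness of an operator on the Dirichlet space. -/
def BddOnDirichlet (T : (ℂ → ℂ) → (ℂ → ℂ)) : Prop :=
  ∃ C, ∀ f, InDirichlet f → InDirichlet (T f) ∧ dirichletNorm (T f) ≤ C * dirichletNorm f

/-- Operator norm on the Dirichlet space. -/
def opNormDir (T : (ℂ → ℂ) → (ℂ → ℂ)) : ℝ :=
  sInf {C : ℝ | 0 ≤ C ∧ ∀ f, InDirichlet f → dirichletNorm (T f) ≤ C * dirichletNorm f}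

/-- Invertibility of an operator on the Dirichlet space. -/
def InvertibleOnDirichlet (T : (ℂ → ℂ) → (ℂ → ℂ)) : Prop :=
  BddOnDirichlet T ∧ ∃ S, BddOnDirichlet S ∧
    ∀ f, InDirichlet f → Set.EqOn (S (T f)) f D1 ∧ Set.EqOn (T (S f)) f D1

/-- Spectrum of an operator on the Dirichlet space. -/
def dirichletSpectrum (T : (ℂ → ℂ) → (ℂ → ℂ)) : Set ℂ :=
  {lam | ¬ InvertibleOnDirichlet (fun f z => lam * f z - T f z)}

/-- Operator norm of M_{u'} : B → H^∞_{v₁}. -/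
def opNormBtoHv1 (u : ℂ → ℂ) : ℝ :=
  sInf {C : ℝ | 0 ≤ C ∧ ∀ f, InBloch f → ∀ z ∈ D1,
    (1 - ‖z‖ ^ 2) * ‖deriv u z * f z‖ ≤ C * blochNorm f}

/-- Operator norm of M_{u'} : 𝒟 → A². -/
def opNormDtoA2 (u : ℂ → ℂ) : ℝ :=
  sInf {C : ℝ | 0 ≤ C ∧ ∀ f, InDirichlet f →
    Real.sqrt ((1 / Real.pi) * ∫ z in D1, ‖deriv u z * f z‖ ^ 2) ≤ C * dirichletNorm f}

/-- The logarithmic weight log(e/(1-|z|²)). -/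
def logWeight (z : ℂ) : ℝ := Real.log (Real.exp 1 / (1 - ‖z‖ ^ 2))

/-- Characterization of multipliers of the Bloch space: u ∈ H^∞ and the log condition. -/
def MultBChar (u : ℂ → ℂ) : Prop :=
  (∃ M, ∀ z ∈ D1, ‖u z‖ ≤ M) ∧
  (∃ M, ∀ z ∈ D1, (1 - ‖z‖ ^ 2) * ‖deriv u z‖ * logWeight z ≤ M)

open ComplexConjugate

lemma mem_D1 {z : ℂ} : z ∈ D1 ↔ ‖z‖ < 1 := mem_ball_zero_iff

lemma zero_mem_D1 : (0 : ℂ) ∈ D1 := mem_D1.2 (by simp)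

lemma isOpen_D1 : IsOpen D1 := isOpen_ball

lemma one_sub_norm_sq_pos {z : ℂ} (hz : z ∈ D1) : 0 < 1 - ‖z‖ ^ 2 := by
  have := mem_D1.1 hz
  nlinarith [norm_nonneg z]

lemma AnalyticOnD.differentiableAt {f : ℂ → ℂ} (hf : AnalyticOnD f) {z : ℂ} (hz : z ∈ D1) :
    DifferentiableAt ℂ f z :=
  DifferentiableOn.differentiableAt hf (isOpen_D1.mem_nhds hz)

section BlochNorm

variable {f : ℂ → ℂ}

lemma blochSemi_nonneg (f : ℂ → ℂ) : 0 ≤ blochSemi f :=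
  Real.iSup_nonneg fun z => mul_nonneg (one_sub_norm_sq_pos z.2).le (norm_nonneg _)

lemma blochNorm_nonneg (f : ℂ → ℂ) : 0 ≤ blochNorm f :=
  add_nonneg (norm_nonneg _) (blochSemi_nonneg f)

lemma blochSemi_le_blochNorm (f : ℂ → ℂ) : blochSemi f ≤ blochNorm f :=
  le_add_of_nonneg_left (norm_nonneg _)

lemma norm_apply_zero_le_blochNorm (f : ℂ → ℂ) : ‖f 0‖ ≤ blochNorm f :=
  le_add_of_nonneg_right (blochSemi_nonneg f)

lemma InBloch.le_blochSemi (hf : InBloch f) {z : ℂ} (hz : z ∈ D1) :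
    (1 - ‖z‖ ^ 2) * ‖deriv f z‖ ≤ blochSemi f := by
  obtain ⟨C, hC⟩ := hf.2
  exact le_ciSup (f := fun w : D1 => (1 - ‖(w : ℂ)‖ ^ 2) * ‖deriv f w‖)
    ⟨C, by rintro _ ⟨w, rfl⟩; exact hC w w.2⟩ ⟨z, hz⟩

lemma blochSemi_le {C : ℝ} (h : ∀ z ∈ D1, (1 - ‖z‖ ^ 2) * ‖deriv f z‖ ≤ C) :
    blochSemi f ≤ C :=
  haveI : Nonempty D1 := ⟨⟨0, zero_mem_D1⟩⟩
  ciSup_le fun z => h z z.2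

lemma InBloch.norm_deriv_le (hf : InBloch f) {z : ℂ} (hz : z ∈ D1) :
    ‖deriv f z‖ ≤ blochSemi f / (1 - ‖z‖ ^ 2) := by
  rw [le_div_iff₀ (one_sub_norm_sq_pos hz), mul_comm]
  exact hf.le_blochSemi hz

lemma InBloch.norm_deriv_le_div_one_sub_norm (hf : InBloch f) {z : ℂ} (hz : z ∈ D1) :
    ‖deriv f z‖ ≤ blochSemi f / (1 - ‖z‖) :=
  (hf.norm_deriv_le hz).trans <| div_le_div_of_nonneg_left (blochSemi_nonneg f)
    (by linarith [mem_D1.1 hz]) (by nlinarith [mem_D1.1 hz, norm_nonneg z])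

lemma inBloch_id : InBloch fun z => z := ⟨differentiableOn_id, 1, fun z _ => by simp⟩

end BlochNorm

lemma bddOnBloch_of_forall_le {T : (ℂ → ℂ) → (ℂ → ℂ)} {A B : ℝ}
    (hT : ∀ f, InBloch f → AnalyticOnD (T f))
    (h0 : ∀ f, InBloch f → ‖T f 0‖ ≤ A * blochNorm f)
    (hT' : ∀ f, InBloch f → ∀ z ∈ D1, (1 - ‖z‖ ^ 2) * ‖deriv (T f) z‖ ≤ B * blochNorm f) :
    BddOnBloch T :=
  ⟨A + B, fun f hf =>
    ⟨⟨hT f hf, _, hT' f hf⟩, by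
      have := blochSemi_le (hT' f hf)
      rw [blochNorm, add_mul]
      linarith [h0 f hf]⟩⟩

lemma BddOnBloch.exists_forall_le {T : (ℂ → ℂ) → (ℂ → ℂ)} (hT : BddOnBloch T) :
    ∃ C, 0 ≤ C ∧ ∀ f, InBloch f → ∀ z ∈ D1,
      (1 - ‖z‖ ^ 2) * ‖deriv (T f) z‖ ≤ C * blochNorm f := by
  obtain ⟨C, hC⟩ := hT
  refine ⟨max C 0, le_max_right _ _, fun f hf z hz => ?_⟩
  calc (1 - ‖z‖ ^ 2) * ‖deriv (T f) z‖ ≤ blochNorm (T f) :=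
        ((hC f hf).1.le_blochSemi hz).trans (blochSemi_le_blochNorm _)
    _ ≤ C * blochNorm f := (hC f hf).2
    _ ≤ max C 0 * blochNorm f :=
        mul_le_mul_of_nonneg_right (le_max_left _ _) (blochNorm_nonneg f)

section Derivatives

variable {u φ f : ℂ → ℂ}

lemma deriv_mult (hu : AnalyticOnD u) (hf : AnalyticOnD f) {z : ℂ} (hz : z ∈ D1) :
    deriv (mult u f) z = deriv u z * f z + u z * deriv f z :=
  ((hu.differentiableAt hz).hasDerivAt.mul (hf.differentiableAt hz).hasDerivAt).deriv

lemma analyticOnD_mult (hu : AnalyticOnD u) (hf : AnalyticOnD f) : AnalyticOnD (mult u f) :=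
  hu.mul hf

lemma deriv_wco (hu : AnalyticOnD u) (hφ : AnalyticOnD φ) (hmaps : MapsTo φ D1 D1)
    (hf : AnalyticOnD f) {z : ℂ} (hz : z ∈ D1) :
    deriv (wco u φ f) z = deriv u z * f (φ z) + u z * (deriv f (φ z) * deriv φ z) :=
  ((hu.differentiableAt hz).hasDerivAt.mul
    ((hf.differentiableAt (hmaps hz)).hasDerivAt.comp z (hφ.differentiableAt hz).hasDerivAt)).deriv

lemma analyticOnD_wco (hu : AnalyticOnD u) (hφ : AnalyticOnD φ) (hmaps : MapsTo φ D1 D1)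
    (hf : AnalyticOnD f) : AnalyticOnD (wco u φ f) :=
  hu.mul (hf.comp hφ hmaps)

end Derivatives

section LogWeight

variable {z : ℂ}

lemma logWeight_eq (hz : z ∈ D1) : logWeight z = 1 - Real.log (1 - ‖z‖ ^ 2) := by
  rw [logWeight, Real.log_div (Real.exp_ne_zero 1) (one_sub_norm_sq_pos hz).ne', Real.log_exp]

lemma one_le_logWeight (hz : z ∈ D1) : 1 ≤ logWeight z := by
  rw [logWeight_eq hz]
  have : Real.log (1 - ‖z‖ ^ 2) ≤ 0 :=
    Real.log_nonpos (one_sub_norm_sq_pos hz).le (by linarith [sq_nonneg ‖z‖])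
  linarith

lemma logWeight_pos (hz : z ∈ D1) : 0 < logWeight z :=
  zero_lt_one.trans_le (one_le_logWeight hz)

lemma ofReal_logWeight_ne_zero (hz : z ∈ D1) : (logWeight z : ℂ) ≠ 0 :=
  ofReal_ne_zero.2 (logWeight_pos hz).ne'

lemma logWeight_le_of_norm_le {r : ℝ} (hr : r < 1) (hz : ‖z‖ ≤ r) :
    logWeight z ≤ 1 - Real.log (1 - r ^ 2) := by
  have hr0 : 0 ≤ r := (norm_nonneg z).trans hz
  have hzD : z ∈ D1 := mem_D1.2 (hz.trans_lt hr)
  rw [logWeight_eq hzD]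
  have : Real.log (1 - r ^ 2) ≤ Real.log (1 - ‖z‖ ^ 2) :=
    Real.log_le_log (by nlinarith) (by nlinarith [norm_nonneg z])
  linarith

lemma norm_le_of_logWeight_le {M : ℝ} (hz : z ∈ D1) (h : logWeight z ≤ M) :
    ‖z‖ ≤ 1 - Real.exp (1 - M) / 2 := by
  rw [logWeight_eq hz] at h
  have hδ : Real.exp (1 - M) ≤ 1 - ‖z‖ ^ 2 := by
    rw [← Real.exp_log (one_sub_norm_sq_pos hz)]
    exact Real.exp_le_exp.2 (by linarith)
  nlinarith [norm_nonneg z, Real.exp_pos (1 - M)]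

lemma continuousOn_logWeight : ContinuousOn logWeight D1 := by
  refine ContinuousOn.log (continuousOn_const.div (by fun_prop) fun w hw => ?_) fun w hw => ?_
  · exact (one_sub_norm_sq_pos hw).ne'
  · exact (div_pos (Real.exp_pos 1) (one_sub_norm_sq_pos hw)).ne'

lemma neg_log_one_sub_norm_le (hz : z ∈ D1) :
    -Real.log (1 - ‖z‖) ≤ Real.log 2 + logWeight z - 1 := by
  have hz1 := mem_D1.1 hz
  have hz0 := norm_nonneg z
  have : Real.log (1 - ‖z‖ ^ 2) ≤ Real.log 2 + Real.log (1 - ‖z‖) := by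
    rw [← Real.log_mul two_ne_zero (by linarith)]
    exact Real.log_le_log (one_sub_norm_sq_pos hz) (by nlinarith)
  linarith [logWeight_eq hz]

end LogWeight

section Growth

variable {f : ℂ → ℂ} {z : ℂ}

lemma ofReal_mul_mem_D1 (hz : z ∈ D1) {t : ℝ} (ht : t ∈ Icc (0 : ℝ) 1) : (t : ℂ) * z ∈ D1 := by
  rw [mem_D1, norm_mul, norm_real, Real.norm_of_nonneg ht.1]
  exact (mul_le_of_le_one_left (norm_nonneg z) ht.2).trans_lt (mem_D1.1 hz)

lemma InBloch.norm_sub_apply_zero_le (hf : InBloch f) (hz : z ∈ D1) :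
    ‖f z - f 0‖ ≤ blochSemi f * -Real.log (1 - ‖z‖) := by
  set r := ‖z‖
  set s := blochSemi f
  have hr1 : r < 1 := mem_D1.1 hz
  have hr0 : 0 ≤ r := norm_nonneg z
  have hpos : ∀ t ∈ Icc (0 : ℝ) 1, 0 < 1 - t * r := fun t ht => by nlinarith [ht.2]
  have hf' : ∀ t ∈ Icc (0 : ℝ) 1,
      HasDerivAt (fun t : ℝ => f (t * z) - f 0) (deriv f (t * z) * z) t := fun t ht => by
    have := (hf.1.differentiableAt (ofReal_mul_mem_D1 hz ht)).hasDerivAt.comp (t : ℂ)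
      ((hasDerivAt_id (t : ℂ)).mul_const z)
    simpa using (this.comp_ofReal).sub_const (f 0)
  have hB : ∀ t ∈ Icc (0 : ℝ) 1,
      HasDerivAt (fun t => s * -Real.log (1 - t * r)) (s * (r / (1 - t * r))) t := fun t ht => by
    have := ((((hasDerivAt_id t).mul_const r).const_sub 1).log (hpos t ht).ne').fun_neg.const_mul s
    exact this.congr_deriv (by simp [neg_div])
  have hbound : ∀ t ∈ Icc (0 : ℝ) 1, ‖deriv f (t * z) * z‖ ≤ s * (r / (1 - t * r)) :=
    fun t ht => by
      have hderiv := hf.norm_deriv_le_div_one_sub_norm (ofReal_mul_mem_D1 hz ht)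
      rw [norm_mul, norm_real, Real.norm_of_nonneg ht.1] at hderiv
      calc ‖deriv f (t * z) * z‖ = ‖deriv f (t * z)‖ * r := norm_mul _ _
        _ ≤ s / (1 - t * r) * r := mul_le_mul_of_nonneg_right hderiv hr0
        _ = s * (r / (1 - t * r)) := by ring
  have key := image_norm_le_of_norm_deriv_right_le_deriv_boundary'
    (fun t ht => (hf' t ht).continuousAt.continuousWithinAt)
    (fun t ht => (hf' t (Ico_subset_Icc_self ht)).hasDerivWithinAt)
    (by simp) (fun t ht => (hB t ht).continuousAt.continuousWithinAt)
    (fun t ht => (hB t (Ico_subset_Icc_self ht)).hasDerivWithinAt)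
    (fun t ht => hbound t (Ico_subset_Icc_self ht)) (right_mem_Icc.2 zero_le_one)
  simpa using key

lemma InBloch.norm_le_blochNorm_mul_logWeight (hf : InBloch f) (hz : z ∈ D1) :
    ‖f z‖ ≤ blochNorm f * logWeight z := by
  have hsub := hf.norm_sub_apply_zero_le hz
  have hlog := neg_log_one_sub_norm_le hz
  have hW := one_le_logWeight hz
  have hs := blochSemi_nonneg f
  have h2 := Real.log_two_lt_d9
  calc ‖f z‖ ≤ ‖f 0‖ + ‖f z - f 0‖ := norm_le_insert' _ _
    _ ≤ ‖f 0‖ * logWeight z + blochSemi f * logWeight z := by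
        gcongr
        · exact le_mul_of_one_le_right (norm_nonneg _) hW
        · exact hsub.trans (mul_le_mul_of_nonneg_left (by linarith) hs)
    _ = blochNorm f * logWeight z := by rw [blochNorm, add_mul]

end Growth

lemma re_inv_one_sub_pos {ζ : ℂ} (h : ‖ζ‖ < 1) : 0 < ((1 - ζ)⁻¹).re := by
  have hre : 0 < (1 - ζ).re := by
    simp only [sub_re, one_re]
    linarith [re_le_norm ζ]
  rw [inv_re]
  exact div_pos hre (normSq_pos.2 fun h0 => by simp [h0] at hre)

section LogKernel

variable {a z : ℂ}

lemma norm_conj_mul_lt_one (ha : a ∈ D1) (hz : z ∈ D1) : ‖conj a * z‖ < 1 := by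
  rw [norm_mul, RCLike.norm_conj]
  exact mul_lt_one_of_nonneg_of_lt_one_left (norm_nonneg a) (mem_D1.1 ha) (mem_D1.1 hz).le

lemma one_sub_norm_mul_le (a z : ℂ) : 1 - ‖a‖ * ‖z‖ ≤ ‖1 - conj a * z‖ := by
  simpa [RCLike.norm_conj] using norm_sub_norm_le (1 : ℂ) (conj a * z)

lemma one_sub_norm_mul_pos (ha : a ∈ D1) (hz : z ∈ D1) : 0 < 1 - ‖a‖ * ‖z‖ := by
  nlinarith [mem_D1.1 ha, mem_D1.1 hz, norm_nonneg a, norm_nonneg z]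

lemma norm_one_sub_conj_mul_pos (ha : a ∈ D1) (hz : z ∈ D1) : 0 < ‖1 - conj a * z‖ :=
  (one_sub_norm_mul_le a z).trans_lt' (one_sub_norm_mul_pos ha hz)

lemma norm_one_sub_conj_mul_le_two (ha : a ∈ D1) (hz : z ∈ D1) : ‖1 - conj a * z‖ ≤ 2 := by
  linarith [norm_sub_le (1 : ℂ) (conj a * z), norm_one (α := ℂ), norm_conj_mul_lt_one ha hz]

def logKernel (a z : ℂ) : ℂ := Complex.log (Real.exp 1 / (1 - conj a * z))

lemma hasDerivAt_logKernel (ha : a ∈ D1) (hz : z ∈ D1) :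
    HasDerivAt (logKernel a) (conj a / (1 - conj a * z)) z := by
  have hlt := norm_conj_mul_lt_one ha hz
  have hne : 1 - conj a * z ≠ 0 := fun h => by
    simpa [h] using re_inv_one_sub_pos hlt
  have hslit : (Real.exp 1 : ℂ) / (1 - conj a * z) ∈ slitPlane := by
    rw [mem_slitPlane_iff, div_eq_mul_inv, re_ofReal_mul]
    exact Or.inl (mul_pos (Real.exp_pos 1) (re_inv_one_sub_pos hlt))
  have hden : HasDerivAt (fun w => 1 - conj a * w) (-conj a) z := by
    simpa using ((hasDerivAt_id z).const_mul (conj a)).const_sub 1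
  have := ((hasDerivAt_const z (Real.exp 1 : ℂ)).div hden hne).clog hslit
  refine this.congr_deriv ?_
  have : (Real.exp 1 : ℂ) ≠ 0 := ofReal_ne_zero.2 (Real.exp_ne_zero 1)
  simp only [Pi.div_apply]
  field_simp
  ring

lemma analyticOnD_logKernel (ha : a ∈ D1) : AnalyticOnD (logKernel a) := fun _ hz =>
  (hasDerivAt_logKernel ha hz).differentiableAt.differentiableWithinAt

lemma re_logKernel (ha : a ∈ D1) (hz : z ∈ D1) :
    (logKernel a z).re = 1 - Real.log ‖1 - conj a * z‖ := by
  rw [logKernel, log_re, norm_div, norm_real, Real.norm_of_nonneg (Real.exp_pos 1).le,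
    Real.log_div (Real.exp_ne_zero 1) (norm_one_sub_conj_mul_pos ha hz).ne', Real.log_exp]

lemma re_logKernel_nonneg (ha : a ∈ D1) (hz : z ∈ D1) : 0 ≤ (logKernel a z).re := by
  rw [re_logKernel ha hz]
  have : Real.log ‖1 - conj a * z‖ ≤ 1 := by
    calc Real.log ‖1 - conj a * z‖ ≤ Real.log 2 :=
          Real.log_le_log (norm_one_sub_conj_mul_pos ha hz) (norm_one_sub_conj_mul_le_two ha hz)
      _ ≤ 1 := by linarith [Real.log_two_lt_d9]
  linarith

lemma logKernel_zero (a : ℂ) : logKernel a 0 = 1 := by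
  rw [logKernel, mul_zero, sub_zero, div_one, ← ofReal_log (Real.exp_pos 1).le, Real.log_exp,
    ofReal_one]

lemma norm_logKernel_le (ha : a ∈ D1) (hz : z ∈ D1) :
    ‖logKernel a z‖ ≤ 1 - Real.log (1 - ‖a‖ * ‖z‖) + Real.pi := by
  have hre : |(logKernel a z).re| ≤ 1 - Real.log (1 - ‖a‖ * ‖z‖) := by
    rw [abs_of_nonneg (re_logKernel_nonneg ha hz), re_logKernel ha hz]
    have : Real.log (1 - ‖a‖ * ‖z‖) ≤ Real.log ‖1 - conj a * z‖ :=
      Real.log_le_log (one_sub_norm_mul_pos ha hz) (one_sub_norm_mul_le a z)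
    linarith
  have him : |(logKernel a z).im| ≤ Real.pi := by
    rw [logKernel, log_im]
    exact abs_arg_le_pi _
  linarith [norm_le_abs_re_add_abs_im (logKernel a z)]

lemma weighted_norm_conj_div_le (ha : a ∈ D1) (hz : z ∈ D1) :
    (1 - ‖z‖ ^ 2) * ‖conj a / (1 - conj a * z)‖ ≤ 2 := by
  have hz1 := mem_D1.1 hz
  have hz0 := norm_nonneg z
  have hden : 1 - ‖z‖ ≤ ‖1 - conj a * z‖ := by
    nlinarith [one_sub_norm_mul_le a z, mem_D1.1 ha, norm_nonneg a]
  rw [norm_div, RCLike.norm_conj]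
  calc (1 - ‖z‖ ^ 2) * (‖a‖ / ‖1 - conj a * z‖) ≤ (1 - ‖z‖ ^ 2) * (1 / (1 - ‖z‖)) :=
        mul_le_mul_of_nonneg_left (div_le_div₀ zero_le_one (mem_D1.1 ha).le (by linarith) hden)
          (one_sub_norm_sq_pos hz).le
    _ = 1 + ‖z‖ := by
        rw [show 1 - ‖z‖ ^ 2 = (1 + ‖z‖) * (1 - ‖z‖) by ring]
        field_simp [show 1 - ‖z‖ ≠ 0 by linarith]
    _ ≤ 2 := by linarith

lemma weighted_norm_deriv_logKernel_le (ha : a ∈ D1) :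
    ∀ z ∈ D1, (1 - ‖z‖ ^ 2) * ‖deriv (logKernel a) z‖ ≤ 2 := fun z hz => by
  rw [(hasDerivAt_logKernel ha hz).deriv]
  exact weighted_norm_conj_div_le ha hz

lemma inBloch_logKernel (ha : a ∈ D1) : InBloch (logKernel a) :=
  ⟨analyticOnD_logKernel ha, 2, weighted_norm_deriv_logKernel_le ha⟩

lemma blochNorm_logKernel_le (ha : a ∈ D1) : blochNorm (logKernel a) ≤ 3 := by
  have := blochSemi_le (weighted_norm_deriv_logKernel_le ha)
  rw [blochNorm, logKernel_zero, norm_one]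
  linarith

lemma logKernel_self (ha : a ∈ D1) : logKernel a a = logWeight a := by
  rw [logKernel, conj_mul', logWeight, ofReal_log (div_pos (Real.exp_pos 1)
    (one_sub_norm_sq_pos ha)).le]
  push_cast
  rfl

end LogKernel

section LogKernelSq

variable {a z : ℂ}

lemma norm_logKernel_le_logWeight (ha : a ∈ D1) (hz : z ∈ D1) :
    ‖logKernel a z‖ ≤ 6 * logWeight a := by
  have ha1 := mem_D1.1 ha
  have hlog : Real.log (1 - ‖a‖) ≤ Real.log (1 - ‖a‖ * ‖z‖) :=
    Real.log_le_log (by linarith)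
      (by nlinarith [mul_le_of_le_one_right (norm_nonneg a) (mem_D1.1 hz).le])
  linarith [norm_logKernel_le ha hz, neg_log_one_sub_norm_le ha, one_le_logWeight ha,
    Real.log_two_lt_d9, Real.pi_le_four]

def logKernelSq (a z : ℂ) : ℂ := logKernel a z ^ 2 / logWeight a

lemma hasDerivAt_logKernelSq (ha : a ∈ D1) (hz : z ∈ D1) :
    HasDerivAt (logKernelSq a)
      (2 * logKernel a z * (conj a / (1 - conj a * z)) / logWeight a) z := by
  have := ((hasDerivAt_logKernel ha hz).pow 2).div_const (logWeight a : ℂ)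
  exact this.congr_deriv (by ring)

lemma weighted_norm_deriv_logKernelSq_le (ha : a ∈ D1) :
    ∀ z ∈ D1, (1 - ‖z‖ ^ 2) * ‖deriv (logKernelSq a) z‖ ≤ 24 := fun z hz => by
  have hW : 0 < logWeight a := logWeight_pos ha
  rw [(hasDerivAt_logKernelSq ha hz).deriv, norm_div, norm_mul, norm_mul, norm_real,
    Real.norm_of_nonneg hW.le, Complex.norm_two]
  calc (1 - ‖z‖ ^ 2) * (2 * ‖logKernel a z‖ * ‖conj a / (1 - conj a * z)‖ / logWeight a)
      = 2 * (‖logKernel a z‖ / logWeight a) * ((1 - ‖z‖ ^ 2) * ‖conj a / (1 - conj a * z)‖) := by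
        ring
    _ ≤ 2 * 6 * 2 := by
        gcongr
        · exact mul_nonneg (one_sub_norm_sq_pos hz).le (norm_nonneg _)
        · exact (div_le_iff₀ hW).2 (norm_logKernel_le_logWeight ha hz)
        · exact weighted_norm_conj_div_le ha hz
    _ = 24 := by norm_num

lemma inBloch_logKernelSq (ha : a ∈ D1) : InBloch (logKernelSq a) :=
  ⟨fun _ hz => (hasDerivAt_logKernelSq ha hz).differentiableAt.differentiableWithinAt, 24,
    weighted_norm_deriv_logKernelSq_le ha⟩

lemma blochNorm_logKernelSq_le (ha : a ∈ D1) : blochNorm (logKernelSq a) ≤ 25 := by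
  have h0 : ‖logKernelSq a 0‖ ≤ 1 := by
    rw [logKernelSq, logKernel_zero, one_pow, norm_div, norm_one, norm_real,
      Real.norm_of_nonneg (logWeight_pos ha).le]
    exact div_le_one_of_le₀ (one_le_logWeight ha) (logWeight_pos ha).le
  have := blochSemi_le (weighted_norm_deriv_logKernelSq_le ha)
  rw [blochNorm]
  linarith

lemma logKernelSq_self (ha : a ∈ D1) : logKernelSq a a = logWeight a := by
  have hW := ofReal_logWeight_ne_zero ha
  rw [logKernelSq, logKernel_self ha]
  field_simp

end LogKernelSq

section Extraction

variable {u φ : ℂ → ℂ} {z : ℂ}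

lemma weighted_norm_deriv_mul_norm_le (hu : InBloch u) (hφ : AnalyticOnD φ)
    (hmaps : MapsTo φ D1 D1) (huφ : InBloch (mult u φ)) (hz : z ∈ D1) :
    (1 - ‖z‖ ^ 2) * ‖deriv φ z‖ * ‖u z‖ ≤ blochSemi (mult u φ) + blochSemi u := by
  have hprod := huφ.le_blochSemi hz
  rw [deriv_mult hu.1 hφ hz] at hprod
  have hφz : ‖φ z‖ ≤ 1 := (mem_D1.1 (hmaps hz)).le
  have hw := (one_sub_norm_sq_pos hz).le
  calc (1 - ‖z‖ ^ 2) * ‖deriv φ z‖ * ‖u z‖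
      = (1 - ‖z‖ ^ 2) * ‖(deriv u z * φ z + u z * deriv φ z) - deriv u z * φ z‖ := by
        rw [add_sub_cancel_left, norm_mul, mul_assoc, mul_comm ‖deriv φ z‖]
    _ ≤ (1 - ‖z‖ ^ 2) * ‖deriv u z * φ z + u z * deriv φ z‖
          + (1 - ‖z‖ ^ 2) * (‖deriv u z‖ * ‖φ z‖) := by
        rw [← mul_add, ← norm_mul]
        exact mul_le_mul_of_nonneg_left (norm_sub_le _ _) hw
    _ ≤ blochSemi (mult u φ) + (1 - ‖z‖ ^ 2) * ‖deriv u z‖ := by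
        gcongr
        exact mul_le_of_le_one_right (norm_nonneg _) hφz
    _ ≤ blochSemi (mult u φ) + blochSemi u := by gcongr; exact hu.le_blochSemi hz

/-- At `a = φ z` the kernels `f_a` and `g_a = f_a² / logWeight a` take the same value while
`g_a'(a) = 2 f_a'(a)`, so testing `u C_φ` on `2 f_a - g_a` cancels the term `u φ' f'(φ z)`. -/
lemma weighted_norm_deriv_mul_logWeight_le {C : ℝ} (hu : AnalyticOnD u) (hφ : AnalyticOnD φ)
    (hmaps : MapsTo φ D1 D1) (hC0 : 0 ≤ C)
    (hC : ∀ f, InBloch f → ∀ z ∈ D1, (1 - ‖z‖ ^ 2) * ‖deriv (wco u φ f) z‖ ≤ C * blochNorm f)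
    (hz : z ∈ D1) :
    (1 - ‖z‖ ^ 2) * ‖deriv u z‖ * logWeight (φ z) ≤ 31 * C := by
  set a := φ z
  have ha : a ∈ D1 := hmaps hz
  have hf := hC _ (inBloch_logKernel ha) z hz
  have hg := hC _ (inBloch_logKernelSq ha) z hz
  rw [deriv_wco hu hφ hmaps (inBloch_logKernel ha).1 hz] at hf
  rw [deriv_wco hu hφ hmaps (inBloch_logKernelSq ha).1 hz] at hg
  set Ef := deriv u z * logKernel a a + u z * (deriv (logKernel a) a * deriv φ z)
  set Eg := deriv u z * logKernelSq a a + u z * (deriv (logKernelSq a) a * deriv φ z)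
  have hW := ofReal_logWeight_ne_zero ha
  have hcomb : deriv u z * logWeight a = 2 * Ef - Eg := by
    simp only [Ef, Eg, (hasDerivAt_logKernel ha ha).deriv, (hasDerivAt_logKernelSq ha ha).deriv,
      logKernel_self ha, logKernelSq_self ha]
    field_simp
    ring
  have hnorm : ‖deriv u z‖ * logWeight a = ‖2 * Ef - Eg‖ := by
    rw [← hcomb, norm_mul, norm_real,
      Real.norm_of_nonneg (logWeight_pos ha).le]
  have hw := (one_sub_norm_sq_pos hz).le
  calc (1 - ‖z‖ ^ 2) * ‖deriv u z‖ * logWeight a = (1 - ‖z‖ ^ 2) * ‖2 * Ef - Eg‖ := by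
        rw [mul_assoc, hnorm]
    _ ≤ 2 * ((1 - ‖z‖ ^ 2) * ‖Ef‖) + (1 - ‖z‖ ^ 2) * ‖Eg‖ := by
        have := norm_sub_le (2 * Ef) Eg
        rw [norm_mul, Complex.norm_two] at this
        nlinarith
    _ ≤ 2 * (C * 3) + C * 25 :=
        add_le_add
          (mul_le_mul_of_nonneg_left
            (hf.trans (mul_le_mul_of_nonneg_left (blochNorm_logKernel_le ha) hC0)) zero_le_two)
          (hg.trans (mul_le_mul_of_nonneg_left (blochNorm_logKernelSq_le ha) hC0))
    _ = 31 * C := by ring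

end Extraction

lemma HasSum.re_le_norm {ι : Type*} {f : ι → ℂ} {s : ℂ} (hs : HasSum f s)
    (hf : ∀ k, 0 ≤ (f k).re) (j : ι) : (f j).re ≤ ‖s‖ :=
  (le_hasSum (hasSum_re hs) j fun k _ => hf k).trans (Complex.re_le_norm s)

section Series

variable {b c : ℕ → ℂ}

def logKernelSeries (b c : ℕ → ℂ) (z : ℂ) : ℂ := ∑' k, c k * logKernel (b k) z

lemma norm_mul_logKernel_le_of_mem_ball (hb : ∀ k, b k ∈ D1) {ρ : ℝ} (hρ : ρ < 1) (k : ℕ)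
    {w : ℂ} (hw : w ∈ ball (0 : ℂ) ρ) :
    ‖c k * logKernel (b k) w‖ ≤ ‖c k‖ * (1 - Real.log (1 - ρ) + Real.pi) := by
  have hw1 : ‖w‖ < ρ := mem_ball_zero_iff.1 hw
  have hwD : w ∈ D1 := mem_D1.2 (hw1.trans hρ)
  have hlog : Real.log (1 - ρ) ≤ Real.log (1 - ‖b k‖ * ‖w‖) :=
    Real.log_le_log (by linarith [(norm_nonneg w).trans_lt hw1])
      (by nlinarith [mul_le_of_le_one_left (norm_nonneg w) (mem_D1.1 (hb k)).le])
  rw [norm_mul]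
  gcongr
  linarith [norm_logKernel_le (hb k) hwD]

lemma exists_mem_ball_of_mem_D1 {z : ℂ} (hz : z ∈ D1) : ∃ ρ < 1, z ∈ ball (0 : ℂ) ρ := by
  obtain ⟨ρ, hzρ, hρ⟩ := exists_between (mem_D1.1 hz)
  exact ⟨ρ, hρ, mem_ball_zero_iff.2 hzρ⟩

variable (hb : ∀ k, b k ∈ D1) (hc : Summable fun k => ‖c k‖)
include hb hc

lemma hasSum_logKernelSeries {z : ℂ} (hz : z ∈ D1) :
    HasSum (fun k => c k * logKernel (b k) z) (logKernelSeries b c z) := by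
  obtain ⟨ρ, hρ, hzρ⟩ := exists_mem_ball_of_mem_D1 hz
  exact (Summable.of_norm_bounded (hc.mul_right _)
    fun k => norm_mul_logKernel_le_of_mem_ball hb hρ k hzρ).hasSum

lemma analyticOnD_logKernelSeries : AnalyticOnD (logKernelSeries b c) := fun z hz => by
  obtain ⟨ρ, hρ, hzρ⟩ := exists_mem_ball_of_mem_D1 hz
  have hD : ball (0 : ℂ) ρ ⊆ D1 := ball_subset_ball hρ.le
  have := differentiableOn_tsum_of_summable_norm (hc.mul_right _)
    (fun k => ((analyticOnD_logKernel (hb k)).mono hD).const_mul (c k)) isOpen_ball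
    fun k w hw => norm_mul_logKernel_le_of_mem_ball hb hρ k hw
  exact (this.differentiableAt (isOpen_ball.mem_nhds hzρ)).differentiableWithinAt

lemma hasSum_deriv_logKernelSeries {z : ℂ} (hz : z ∈ D1) :
    HasSum (fun k => c k * (conj (b k) / (1 - conj (b k) * z)))
      (deriv (logKernelSeries b c) z) := by
  obtain ⟨ρ, hρ, hzρ⟩ := exists_mem_ball_of_mem_D1 hz
  have hD : ball (0 : ℂ) ρ ⊆ D1 := ball_subset_ball hρ.le
  have := hasSum_deriv_of_summable_norm (hc.mul_right _)
    (fun k => ((analyticOnD_logKernel (hb k)).mono hD).const_mul (c k)) isOpen_ball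
    (fun k w hw => norm_mul_logKernel_le_of_mem_ball hb hρ k hw) hzρ
  simp only [fun k => ((hasDerivAt_logKernel (hb k) hz).const_mul (c k)).deriv] at this
  exact this

lemma inBloch_logKernelSeries : InBloch (logKernelSeries b c) := by
  refine ⟨analyticOnD_logKernelSeries hb hc, 2 * ∑' k, ‖c k‖, fun z hz => ?_⟩
  have hw := one_sub_norm_sq_pos hz
  have hterm : ∀ k, ‖c k * (conj (b k) / (1 - conj (b k) * z))‖ ≤ ‖c k‖ * (2 / (1 - ‖z‖ ^ 2)) :=
    fun k => by
      rw [norm_mul]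
      gcongr
      rw [le_div_iff₀ hw, mul_comm]
      exact weighted_norm_conj_div_le (hb k) hz
  have := (hasSum_deriv_logKernelSeries hb hc hz).norm_le_of_bounded
    (hc.hasSum.mul_right _) hterm
  rw [← mul_div_assoc, le_div_iff₀ hw] at this
  linarith

end Series

section GlidingHump

variable {b : ℕ → ℂ} {t : ℕ → ℝ}

lemma le_norm_logKernelSeries (hb : ∀ k, b k ∈ D1) (ht0 : ∀ k, 0 ≤ t k) (ht : Summable t)
    (j : ℕ) : t j * logWeight (b j) ≤ ‖logKernelSeries b (fun k => t k) (b j)‖ := by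
  have hc : Summable fun k => ‖(t k : ℂ)‖ := by simpa [abs_of_nonneg (ht0 _)] using ht
  have := (hasSum_logKernelSeries hb hc (hb j)).re_le_norm (fun k => ?_) j
  · rwa [re_ofReal_mul, logKernel_self (hb j), ofReal_re] at this
  · rw [re_ofReal_mul]
    exact mul_nonneg (ht0 k) (re_logKernel_nonneg (hb k) (hb j))

lemma le_norm_deriv_logKernelSeries (hb : ∀ k, b k ∈ D1) (ht0 : ∀ k, 0 ≤ t k)
    (hc : Summable fun k => ‖(t k : ℂ) * b k‖) (j : ℕ) :
    t j * ‖b j‖ ^ 2 / (1 - ‖b j‖ ^ 2) ≤ ‖deriv (logKernelSeries b fun k => t k * b k) (b j)‖ := by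
  have hterm : ∀ k, t k * b k * (conj (b k) / (1 - conj (b k) * b j))
      = ((t k * ‖b k‖ ^ 2 : ℝ) : ℂ) * (1 - conj (b k) * b j)⁻¹ := fun k => by
    push_cast
    rw [← mul_conj']
    ring
  have := (hasSum_deriv_logKernelSeries hb hc (hb j)).re_le_norm (fun k => ?_) j
  · rwa [hterm, re_ofReal_mul, conj_mul', ← ofReal_pow, ← ofReal_one, ← ofReal_sub,
      ← ofReal_inv, ofReal_re, ← div_eq_mul_inv] at this
  · rw [hterm, re_ofReal_mul]
    exact mul_nonneg (by have := ht0 k; positivity)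
      (re_inv_one_sub_pos (norm_conj_mul_lt_one (hb k) (hb j))).le

lemma exists_bound_mul_logWeight_of_forall_inBloch {w : ℂ → ℝ}
    (H : ∀ u, InBloch u → ∃ C, ∀ z ∈ D1, w z * ‖u z‖ ≤ C) :
    ∃ C, ∀ z ∈ D1, w z * logWeight z ≤ C := by
  by_contra! hcon
  choose b hb hbig using fun j : ℕ => hcon (4 ^ j)
  have ht0 : ∀ k, 0 ≤ (1 / 2 : ℝ) ^ k := fun k => by positivity
  have hc : Summable fun k => ‖(((1 / 2 : ℝ) ^ k : ℝ) : ℂ)‖ := by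
    simpa using summable_geometric_two
  obtain ⟨C, hC⟩ := H _ (inBloch_logKernelSeries hb hc)
  obtain ⟨j, hj⟩ := pow_unbounded_of_one_lt C one_lt_two
  have hw : 0 ≤ w (b j) := by
    by_contra! h
    nlinarith [hbig j, pow_pos (four_pos (α := ℝ)) j, one_le_logWeight (hb j)]
  have : (2 : ℝ) ^ j < C :=
    calc (2 : ℝ) ^ j = (1 / 2) ^ j * 4 ^ j := by
          rw [← mul_pow]; norm_num
      _ < (1 / 2) ^ j * (w (b j) * logWeight (b j)) := by gcongr; exact hbig j
      _ = w (b j) * ((1 / 2) ^ j * logWeight (b j)) := by ring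
      _ ≤ w (b j) * ‖logKernelSeries b _ (b j)‖ :=
          mul_le_mul_of_nonneg_left (le_norm_logKernelSeries hb ht0 summable_geometric_two j) hw
      _ ≤ C := hC _ (hb j)
  linarith

lemma exists_bound_of_forall_inBloch_deriv {w : ℂ → ℝ} (hw : ContinuousOn w D1)
    (H : ∀ u, InBloch u → ∃ C, ∀ z ∈ D1, (1 - ‖z‖ ^ 2) * ‖deriv u z‖ * w z ≤ C) :
    ∃ M, ∀ z ∈ D1, w z ≤ M := by
  have hK : closedBall (0 : ℂ) (1 / 2) ⊆ D1 := closedBall_subset_ball (by norm_num)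
  obtain ⟨M₀, hM₀⟩ := (isCompact_closedBall (0 : ℂ) (1 / 2)).bddAbove_image (hw.mono hK)
  by_contra! hcon
  choose b hb hbig using fun j : ℕ => hcon (max M₀ (4 ^ j))
  have hbig' : ∀ j, (4 : ℝ) ^ j < w (b j) := fun j => (le_max_right _ _).trans_lt (hbig j)
  -- `w` is bounded near the origin, so the points `b j` stay away from it
  have hhalf : ∀ j, 1 / 4 ≤ ‖b j‖ ^ 2 := fun j => by
    by_contra! h
    have hmem : b j ∈ closedBall (0 : ℂ) (1 / 2) :=
      mem_closedBall_zero_iff.2 (by nlinarith [norm_nonneg (b j)])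
    have := hM₀ (mem_image_of_mem w hmem)
    linarith [le_max_left M₀ (4 ^ j), hbig j]
  have ht0 : ∀ k, 0 ≤ (1 / 2 : ℝ) ^ k := fun k => by positivity
  have hc : Summable fun k => ‖(((1 / 2 : ℝ) ^ k : ℝ) : ℂ) * b k‖ := by
    refine Summable.of_nonneg_of_le (fun k => norm_nonneg _) (fun k => ?_) summable_geometric_two
    rw [norm_mul, norm_real, Real.norm_of_nonneg (ht0 k)]
    exact mul_le_of_le_one_right (ht0 k) (mem_D1.1 (hb k)).le
  obtain ⟨C, hC⟩ := H _ (inBloch_logKernelSeries hb hc)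
  obtain ⟨j, hj⟩ := pow_unbounded_of_one_lt (4 * C) one_lt_two
  have hlow := le_norm_deriv_logKernelSeries hb ht0 hc j
  rw [div_le_iff₀' (one_sub_norm_sq_pos (hb j))] at hlow
  have : (2 : ℝ) ^ j / 4 ≤ C :=
    calc (2 : ℝ) ^ j / 4 = (1 / 2) ^ j * (1 / 4) * 4 ^ j := by
          rw [mul_right_comm, ← mul_pow]; norm_num; ring
      _ ≤ (1 / 2) ^ j * ‖b j‖ ^ 2 * w (b j) := by gcongr; exacts [hhalf j, (hbig' j).le]
      _ ≤ (1 - ‖b j‖ ^ 2) * ‖deriv (logKernelSeries b _) (b j)‖ * w (b j) :=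
          mul_le_mul_of_nonneg_right hlow ((pow_pos four_pos j).le.trans (hbig' j).le)
      _ ≤ C := hC _ (hb j)
  linarith

end GlidingHump

section Characterization

variable {u φ : ℂ → ℂ}

lemma mult_comm (u f : ℂ → ℂ) : mult u f = mult f u := funext fun _ => mul_comm _ _

lemma bddOnBloch_mult_of_multBChar (hu : AnalyticOnD u) (h : MultBChar u) :
    BddOnBloch (mult u) := by
  obtain ⟨⟨M, hM⟩, ⟨L, hL⟩⟩ := h
  have hM0 : 0 ≤ M := (norm_nonneg _).trans (hM 0 zero_mem_D1)
  refine bddOnBloch_of_forall_le (A := M) (B := L + M) (fun f hf => analyticOnD_mult hu hf.1)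
    (fun f hf => ?_) (fun f hf z hz => ?_)
  · rw [mult, norm_mul]
    exact mul_le_mul (hM 0 zero_mem_D1) (norm_apply_zero_le_blochNorm f) (norm_nonneg _) hM0
  · have hw := (one_sub_norm_sq_pos hz).le
    rw [deriv_mult hu hf.1 hz]
    calc (1 - ‖z‖ ^ 2) * ‖deriv u z * f z + u z * deriv f z‖
        ≤ (1 - ‖z‖ ^ 2) * ‖deriv u z‖ * ‖f z‖ + ‖u z‖ * ((1 - ‖z‖ ^ 2) * ‖deriv f z‖) := by
          have := mul_le_mul_of_nonneg_left (norm_add_le (deriv u z * f z) (u z * deriv f z)) hw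
          rw [norm_mul, norm_mul] at this
          linarith
      _ ≤ (1 - ‖z‖ ^ 2) * ‖deriv u z‖ * (blochNorm f * logWeight z) + M * blochNorm f := by
          gcongr
          · exact hf.norm_le_blochNorm_mul_logWeight hz
          · exact hM z hz
          · exact (hf.le_blochSemi hz).trans (blochSemi_le_blochNorm f)
      _ = (1 - ‖z‖ ^ 2) * ‖deriv u z‖ * logWeight z * blochNorm f + M * blochNorm f := by ring
      _ ≤ (L + M) * blochNorm f := by
          rw [add_mul]
          gcongr
          · exact blochNorm_nonneg f
          · exact hL z hz

lemma bddOnBloch_wco_of_norm_le {r A : ℝ} (hu : InBloch u) (hφ : AnalyticOnD φ)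
    (hmaps : MapsTo φ D1 D1) (hr : r < 1) (hφr : ∀ z ∈ D1, ‖φ z‖ ≤ r)
    (hA : ∀ z ∈ D1, (1 - ‖z‖ ^ 2) * ‖deriv φ z‖ * ‖u z‖ ≤ A) :
    BddOnBloch (wco u φ) := by
  set Λ := 1 - Real.log (1 - r ^ 2)
  have hr0 : 0 ≤ r := (norm_nonneg _).trans (hφr 0 zero_mem_D1)
  have hA0 : 0 ≤ A := (mul_nonneg (mul_nonneg (one_sub_norm_sq_pos zero_mem_D1).le
    (norm_nonneg _)) (norm_nonneg _)).trans (hA 0 zero_mem_D1)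
  have hgrowth : ∀ f, InBloch f → ∀ z ∈ D1, ‖f (φ z)‖ ≤ blochNorm f * Λ := fun f hf z hz =>
    (hf.norm_le_blochNorm_mul_logWeight (hmaps hz)).trans
      (mul_le_mul_of_nonneg_left (logWeight_le_of_norm_le hr (hφr z hz)) (blochNorm_nonneg f))
  have hderiv : ∀ f, InBloch f → ∀ z ∈ D1, ‖deriv f (φ z)‖ ≤ blochNorm f / (1 - r ^ 2) :=
    fun f hf z hz => (hf.norm_deriv_le (hmaps hz)).trans
      (div_le_div₀ (blochNorm_nonneg f) (blochSemi_le_blochNorm f) (by nlinarith)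
        (by nlinarith [hφr z hz, norm_nonneg (φ z)]))
  refine bddOnBloch_of_forall_le (A := ‖u 0‖ * Λ) (B := blochSemi u * Λ + A / (1 - r ^ 2))
    (fun f hf => analyticOnD_wco hu.1 hφ hmaps hf.1) (fun f hf => ?_) (fun f hf z hz => ?_)
  · rw [wco, norm_mul, mul_assoc, mul_comm Λ]
    exact mul_le_mul_of_nonneg_left (hgrowth f hf 0 zero_mem_D1) (norm_nonneg _)
  · have hw := (one_sub_norm_sq_pos hz).le
    rw [deriv_wco hu.1 hφ hmaps hf.1 hz]
    calc (1 - ‖z‖ ^ 2) * ‖deriv u z * f (φ z) + u z * (deriv f (φ z) * deriv φ z)‖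
        ≤ (1 - ‖z‖ ^ 2) * ‖deriv u z‖ * ‖f (φ z)‖
          + (1 - ‖z‖ ^ 2) * ‖deriv φ z‖ * ‖u z‖ * ‖deriv f (φ z)‖ := by
          have := mul_le_mul_of_nonneg_left
            (norm_add_le (deriv u z * f (φ z)) (u z * (deriv f (φ z) * deriv φ z))) hw
          rw [norm_mul, norm_mul, norm_mul] at this
          linarith
      _ ≤ blochSemi u * (blochNorm f * Λ) + A * (blochNorm f / (1 - r ^ 2)) :=
          add_le_add
            (mul_le_mul (hu.le_blochSemi hz) (hgrowth f hf z hz) (norm_nonneg _)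
              (blochSemi_nonneg u))
            (mul_le_mul (hA z hz) (hderiv f hf z hz) (norm_nonneg _) hA0)
      _ = (blochSemi u * Λ + A / (1 - r ^ 2)) * blochNorm f := by ring

lemma exists_norm_le_of_forall_bddOnBloch_wco (hφ : AnalyticOnD φ) (hmaps : MapsTo φ D1 D1)
    (H : ∀ u, InBloch u → BddOnBloch (wco u φ)) : ∃ r : ℝ, r < 1 ∧ ∀ z ∈ D1, ‖φ z‖ ≤ r := by
  obtain ⟨M, hM⟩ := exists_bound_of_forall_inBloch_deriv
    (continuousOn_logWeight.comp hφ.continuousOn hmaps) fun u hu => by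
      obtain ⟨C, hC0, hC⟩ := (H u hu).exists_forall_le
      exact ⟨31 * C, fun z hz => weighted_norm_deriv_mul_logWeight_le hu.1 hφ hmaps hC0 hC hz⟩
  exact ⟨1 - Real.exp (1 - M) / 2, by linarith [Real.exp_pos (1 - M)],
    fun z hz => norm_le_of_logWeight_le (hmaps hz) (hM z hz)⟩

lemma multBChar_of_forall_bddOnBloch_wco (hφ : AnalyticOnD φ) (hmaps : MapsTo φ D1 D1)
    (H : ∀ u, InBloch u → BddOnBloch (wco u φ)) : MultBChar φ := by
  refine ⟨⟨1, fun z hz => (mem_D1.1 (hmaps hz)).le⟩,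
    exists_bound_mul_logWeight_of_forall_inBloch fun u hu => ?_⟩
  have huφ : InBloch (mult u φ) := ((H u hu).choose_spec _ inBloch_id).1
  exact ⟨_, fun z hz => weighted_norm_deriv_mul_norm_le hu hφ hmaps huφ hz⟩

end Characterization

/-- M(B,φ) = B iff ‖φ‖_∞ < 1 and φ ∈ M(B). -/
theorem stmt_3 (φ : ℂ → ℂ) (hφ : AnalyticOnD φ) (hmaps : Set.MapsTo φ D1 D1) :
    (∀ u, InBloch u → BddOnBloch (wco u φ)) ↔
      ((∃ r : ℝ, r < 1 ∧ ∀ z ∈ D1, ‖φ z‖ ≤ r) ∧ BddOnBloch (mult φ)) := by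
  refine ⟨fun H => ⟨exists_norm_le_of_forall_bddOnBloch_wco hφ hmaps H,
    bddOnBloch_mult_of_multBChar hφ (multBChar_of_forall_bddOnBloch_wco hφ hmaps H)⟩, ?_⟩
  rintro ⟨⟨r, hr, hφr⟩, hmult⟩ u hu
  obtain ⟨C, hC⟩ := hmult
  have huφ : InBloch (mult u φ) := mult_comm u φ ▸ (hC u hu).1
  exact bddOnBloch_wco_of_norm_le hu hφ hmaps hr hφr
    fun z hz => weighted_norm_deriv_mul_norm_le hu hφ hmaps huφ hz
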